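/- In the ring ℤ[t, t^{-1}], set z = 1 - t - t^{-1} and let S_k denote the Chebyshev polynomial of the second kind evaluated at z. Then for all k ≥ 1, (S_k + t^{-1}S_{k-1})·(S_k + t·S_{k-1}) - S_k·S_{k-1} = 1, and ((S_k+S_{k-1}) + t^{-1}(S_{k-1}+S_{k-2}))·((S_k+S_{k-1}) + t(S_{k-1}+S_{k-2})) - (S_k+S_{k-1})(S_{k-1}+S_{k-2}) = 3 - t - t^{-1} (for k ≥ 2). -/
import Mathlib


/-- Chebyshev polynomial of the second kind evaluated at `z` in a commutative ring. -/
def chebS {R : Type*} [CommRing R] (z : R) : ℕ → R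
  | 0 => 1
  | 1 => z
  | (n+2) => z * chebS z (n+1) - chebS z n

lemma chebS_invariant {R : Type*} [CommRing R] (z : R) :
    ∀ k, chebS z (k+1) ^ 2 - z * chebS z (k+1) * chebS z k + chebS z k ^ 2 = 1 := by
  intro k
  induction k with
  | zero => simp [chebS]; ring
  | succ n ih =>
    have hrec : chebS z (n+2) = z * chebS z (n+1) - chebS z n := rfl
    rw [hrec]
    linear_combination ih

open LaurentPolynomial in
theorem det_ABF :
    let t : LaurentPolynomial ℤ := T 1
    let tinv : LaurentPolynomial ℤ := T (-1)
    let z : LaurentPolynomial ℤ := 1 - t - tinv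
    let S : ℕ → LaurentPolynomial ℤ := chebS z
    (∀ k, 1 ≤ k →
        (S k + tinv * S (k - 1)) * (S k + t * S (k - 1)) - S k * S (k - 1) = 1) ∧
    (∀ k, 2 ≤ k →
        ((S k + S (k - 1)) + tinv * (S (k - 1) + S (k - 2))) *
            ((S k + S (k - 1)) + t * (S (k - 1) + S (k - 2))) -
          (S k + S (k - 1)) * (S (k - 1) + S (k - 2)) = 3 - t - tinv) := by
  intro t tinv z S
  have h : t * tinv = 1 := by
    rw [show t * tinv = T (1 + (-1)) from (T_add 1 (-1)).symm]
    norm_num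
  constructor
  · intro k hk
    obtain ⟨m, rfl⟩ := Nat.exists_eq_add_of_le hk
    have hm : 1 + m - 1 = m := by omega
    rw [show 1 + m = m + 1 by omega] at *
    simp only [Nat.add_sub_cancel]
    linear_combination chebS_invariant z m + (chebS z m)^2 * h
  · intro k hk
    obtain ⟨m, rfl⟩ := Nat.exists_eq_add_of_le hk
    rw [show 2 + m = m + 2 by omega]
    simp only [Nat.add_sub_cancel, show m + 2 - 2 = m from rfl]
    have hrec : chebS z (m+2) = z * chebS z (m+1) - chebS z m := rfl
    show (chebS z (m+2) + chebS z (m+1) + tinv * (chebS z (m+1) + chebS z m)) *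
        (chebS z (m+2) + chebS z (m+1) + t * (chebS z (m+1) + chebS z m)) -
        (chebS z (m+2) + chebS z (m+1)) * (chebS z (m+1) + chebS z m) = 3 - t - tinv
    rw [hrec]
    linear_combination (z + 2) * chebS_invariant z m +
      ((chebS z (m+1) + chebS z m)^2) * h
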